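/- Let G be a bipartite graph with bipartition A ∪ B all of whose edges are arcs coloured from [n], and let Γ act transitively on arc colours and directions. Let G' be the 2n-edge-coloured graph replacing an arc of colour i from A to B by an edge of colour i⁺ and an arc of colour i from B to A by an edge of colour i⁻, and let Γ' be the corresponding group on 2n colours. Then G admits a Γ-switchable homomorphism to the single-arc tournament T_2^i if and only if G' admits a Γ'-switchable homomorphism to K_2^{i⁺}. -/

import Mathlib

open Equiv

/-- An arc-coloured graph (a `(0,n)`-mixed graph): `G u v = some i` records an arc from
`u` to `v` of colour `i`. -/
abbrev ArcG (V : Type) (n : ℕ) := V → V → Option (Fin n)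

/-- `σ` comes from a pair `(β, γ₁, …, γₙ) ∈ S_n × S_2ⁿ`: the new colour of an arc does
not depend on its direction. -/
def Consistent {n : ℕ} (σ : Perm (Fin n × Bool)) : Prop :=
  ∀ i : Fin n, (σ (i, true)).1 = (σ (i, false)).1

/-- Given the arc entries `a = G u v` and `b = G v u`, the new entry `u → v` after acting
by `σ` on (colour, direction relative to `(u,v)`) pairs. -/
def arcSwitch {n : ℕ} (σ : Perm (Fin n × Bool)) (a b : Option (Fin n)) : Option (Fin n) :=
  match a with
  | some i => if (σ (i, true)).2 = true then some (σ (i, true)).1 else none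
  | none =>
    match b with
    | some i => if (σ (i, false)).2 = true then some (σ (i, false)).1 else none
    | none => none

/-- Switching the arc-coloured graph `G` at vertex `v` with respect to `σ`, which
permutes the colours and directions of the incident arcs. -/
def ArcG.switch {V : Type} [DecidableEq V] {n : ℕ} (G : ArcG V n) (v : V)
    (σ : Perm (Fin n × Bool)) : ArcG V n :=
  fun x y => if x = v ∨ y = v then arcSwitch σ (G x y) (G y x) else G x y

/-- Switching with respect to a sequence of (vertex, group element) pairs, in order. -/
def ArcG.switchSeq {V : Type} [DecidableEq V] {n : ℕ} (G : ArcG V n) :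
    List (V × Perm (Fin n × Bool)) → ArcG V n
  | [] => G
  | (v, σ) :: rest => (G.switch v σ).switchSeq rest

/-- `G` admits a `Γ`-switchable homomorphism to the single-arc tournament `T₂^i`
(vertices `false`, `true` and one arc `false → true` of colour `i`). -/
def SwHomT2 {V : Type} [DecidableEq V] {n : ℕ} (Γ : Subgroup (Perm (Fin n × Bool)))
    (G : ArcG V n) (i : Fin n) : Prop :=
  ∃ L, (∀ p ∈ L, p.2 ∈ Γ) ∧ ∃ f : V → Bool,
    ∀ u v j, G.switchSeq L u v = some j → f u = false ∧ f v = true ∧ j = i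

/-- A `2n`-edge-coloured graph, the `2n` colours `{1⁺,1⁻,…,n⁺,n⁻}` being encoded as
`Fin n × Bool`. -/
abbrev EC2 (V : Type) (n : ℕ) := V → V → Option (Fin n × Bool)

/-- Switching an edge-coloured graph at vertex `v`: apply `σ` to the colours of all
incident edges. -/
def EC2.switch {V : Type} [DecidableEq V] {n : ℕ} (G : EC2 V n) (v : V)
    (σ : Perm (Fin n × Bool)) : EC2 V n :=
  fun x y => if x = v ∨ y = v then (G x y).map σ else G x y

/-- Switching with respect to a sequence, in order. -/
def EC2.switchSeq {V : Type} [DecidableEq V] {n : ℕ} (G : EC2 V n) :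
    List (V × Perm (Fin n × Bool)) → EC2 V n
  | [] => G
  | (v, σ) :: rest => (G.switch v σ).switchSeq rest

/-- `G` admits a `Γ'`-switchable homomorphism to `K₂^c`, the single edge of colour `c`. -/
def SwHomK2 {V : Type} [DecidableEq V] {n : ℕ} (Γ : Subgroup (Perm (Fin n × Bool)))
    (G : EC2 V n) (c : Fin n × Bool) : Prop :=
  ∃ L, (∀ p ∈ L, p.2 ∈ Γ) ∧ ∃ f : V → Bool,
    ∀ u v j, G.switchSeq L u v = some j → f u ≠ f v ∧ j = c

/-- Translation `F(G) = G'` of an arc-coloured bipartite graph (with parts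
`A = side⁻¹ false` and `B = side⁻¹ true`) into a `2n`-edge-coloured graph: an arc of
colour `i` from `A` to `B` becomes an edge of colour `i⁺ = (i, true)`, and an arc of
colour `i` from `B` to `A` becomes an edge of colour `i⁻ = (i, false)`. -/
def translateArc {V : Type} {n : ℕ} (side : V → Bool) (G : ArcG V n) : EC2 V n :=
  fun u v =>
    if side u = false ∧ side v = true then
      (match G u v with
       | some i => some (i, true)
       | none => (G v u).map (fun i => (i, false)))
    else if side u = true ∧ side v = false then
      (match G v u with
       | some i => some (i, true)
       | none => (G u v).map (fun i => (i, false)))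
    else none

/-!
Record an arc between `u` and `v` as a label `(colour, direction)` on the ordered pair `(u, v)`.
For an oriented graph and a consistent `σ`, switching at a vertex acts on the labels of the
incident pairs simply by `σ`, and `G'` is this label graph read from the `A`-end of each pair;
hence the translation commutes with switching. So if switching makes every edge of `G'` of colour
`i⁺`, the same switches make every arc of `G` an `A → B` arc of colour `i`, and the bipartition is
a homomorphism to `T₂^i`. Conversely, once `G` is switched onto `T₂^i`, the edges of `G'` have
colour `i⁺` or `i⁻`, the latter being those whose `B`-end goes to the tail of `T₂^i`; switching
these `B`-vertices by some `τ ∈ Γ` with `τ i⁻ = i⁺` leaves only colour `i⁺`.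
-/

section Labels

variable {n : ℕ}

def flipDir (p : Fin n × Bool) : Fin n × Bool := (p.1, !p.2)

theorem Consistent.apply_flipDir {σ : Perm (Fin n × Bool)} (hσ : Consistent σ)
    (p : Fin n × Bool) : σ (flipDir p) = flipDir (σ p) := by
  obtain ⟨j, b⟩ := p
  have hfst : (σ (j, !b)).1 = (σ (j, b)).1 := by cases b <;> simp [hσ j]
  have hsnd : (σ (j, !b)).2 ≠ (σ (j, b)).2 := fun h =>
    Bool.not_ne_self b (Prod.ext_iff.mp (σ.injective (Prod.ext hfst h))).2
  exact Prod.ext hfst (Bool.eq_not.mpr hsnd)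

theorem Consistent.map_flipDir {σ : Perm (Fin n × Bool)} (hσ : Consistent σ)
    (m : Option (Fin n × Bool)) : (m.map flipDir).map σ = (m.map σ).map flipDir := by
  cases m <;> simp [hσ.apply_flipDir]

/-- For `a = G u v` and `b = G v u`: the colour of the arc between `u` and `v`, and whether it
points from `u` to `v`. -/
def arcLabel (a b : Option (Fin n)) : Option (Fin n × Bool) :=
  match a with
  | some i => some (i, true)
  | none => b.map fun i => (i, false)

def arcOfLabel (m : Option (Fin n × Bool)) : Option (Fin n) :=
  m.bind fun p => if p.2 then some p.1 else none

theorem arcSwitch_eq (σ : Perm (Fin n × Bool)) (a b : Option (Fin n)) :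
    arcSwitch σ a b = arcOfLabel ((arcLabel a b).map σ) := by
  cases a <;> cases b <;> rfl

theorem arcLabel_swap {a b : Option (Fin n)} (h : a.isSome → b = none) :
    arcLabel b a = (arcLabel a b).map flipDir := by
  cases a <;> cases b <;> simp_all [arcLabel, flipDir]

theorem arcLabel_arcOfLabel (m : Option (Fin n × Bool)) :
    arcLabel (arcOfLabel m) (arcOfLabel (m.map flipDir)) = m := by
  rcases m with _ | ⟨j, _ | _⟩ <;> rfl

theorem arcOfLabel_map_flipDir {m : Option (Fin n × Bool)} (h : (arcOfLabel m).isSome) :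
    arcOfLabel (m.map flipDir) = none := by
  rcases m with _ | ⟨j, _ | _⟩ <;> simp_all [arcOfLabel, flipDir]

end Labels

namespace ArcG

variable {V : Type} {n : ℕ}

def IsOriented (G : ArcG V n) : Prop := ∀ u v, (G u v).isSome → G v u = none

def label (G : ArcG V n) : EC2 V n := fun u v => arcLabel (G u v) (G v u)

theorem IsOriented.label_swap {G : ArcG V n} (hG : G.IsOriented) (u v : V) :
    G.label v u = (G.label u v).map flipDir :=
  arcLabel_swap (hG u v)

theorem label_isSome {G : ArcG V n} {u v : V} (h : (G.label u v).isSome) :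
    (G u v).isSome ∨ (G v u).isSome := by
  simp only [label] at h
  cases huv : G u v <;> cases hvu : G v u <;> simp_all [arcLabel]

variable [DecidableEq V]

theorem switch_apply (G : ArcG V n) (w : V) (σ : Perm (Fin n × Bool)) (u v : V) :
    G.switch w σ u v =
      if u = w ∨ v = w then arcOfLabel ((G.label u v).map σ) else G u v := by
  simp only [switch, arcSwitch_eq, label]

theorem IsOriented.switch {G : ArcG V n} (hG : G.IsOriented) {σ : Perm (Fin n × Bool)}
    (hσ : Consistent σ) (w : V) : (G.switch w σ).IsOriented := by
  intro u v h
  rw [switch_apply] at h ⊢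
  by_cases hw : u = w ∨ v = w
  · rw [if_pos hw] at h
    rw [if_pos hw.symm, hG.label_swap, hσ.map_flipDir]
    exact arcOfLabel_map_flipDir h
  · rw [if_neg hw] at h
    rw [if_neg (by tauto)]
    exact hG u v h

theorem IsOriented.label_switch {G : ArcG V n} (hG : G.IsOriented) {σ : Perm (Fin n × Bool)}
    (hσ : Consistent σ) (w : V) : (G.switch w σ).label = G.label.switch w σ := by
  funext u v
  simp only [label, EC2.switch, switch_apply]
  by_cases hw : u = w ∨ v = w
  · have hswap : arcLabel (G v u) (G u v) = (arcLabel (G u v) (G v u)).map flipDir :=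
      hG.label_swap u v
    rw [if_pos hw, if_pos hw, if_pos hw.symm, hswap, hσ.map_flipDir, arcLabel_arcOfLabel]
  · rw [if_neg hw, if_neg hw, if_neg (by tauto)]

theorem IsOriented.switchSeq {G : ArcG V n} (hG : G.IsOriented)
    {L : List (V × Perm (Fin n × Bool))} (hL : ∀ p ∈ L, Consistent p.2) :
    (G.switchSeq L).IsOriented := by
  induction L generalizing G with
  | nil => exact hG
  | cons p L ih =>
    exact ih (hG.switch (hL p List.mem_cons_self) p.1)
      fun q hq => hL q (List.mem_cons_of_mem p hq)

theorem IsOriented.label_switchSeq {G : ArcG V n} (hG : G.IsOriented)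
    {L : List (V × Perm (Fin n × Bool))} (hL : ∀ p ∈ L, Consistent p.2) :
    (G.switchSeq L).label = G.label.switchSeq L := by
  induction L generalizing G with
  | nil => rfl
  | cons p L ih =>
    have hσ : Consistent p.2 := hL p List.mem_cons_self
    exact (ih (hG.switch hσ p.1) fun q hq => hL q (List.mem_cons_of_mem p hq)).trans
      (congrArg (EC2.switchSeq · L) (hG.label_switch hσ p.1))

end ArcG

namespace EC2

variable {V : Type} {n : ℕ}

def orientBy (side : V → Bool) (E : EC2 V n) : EC2 V n := fun u v =>
  if side u = false ∧ side v = true then E u v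
  else if side u = true ∧ side v = false then E v u
  else none

theorem orientBy_eq_some {side : V → Bool} {E : EC2 V n} {u v : V} {c : Fin n × Bool}
    (h : E.orientBy side u v = some c) :
    side u = false ∧ side v = true ∧ E u v = some c ∨
      side u = true ∧ side v = false ∧ E v u = some c := by
  unfold orientBy at h
  split_ifs at h with h₁ h₂
  · exact Or.inl ⟨h₁.1, h₁.2, h⟩
  · exact Or.inr ⟨h₂.1, h₂.2, h⟩

variable [DecidableEq V]

theorem orientBy_switch (side : V → Bool) (E : EC2 V n) (w : V) (σ : Perm (Fin n × Bool)) :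
    (E.switch w σ).orientBy side = (E.orientBy side).switch w σ := by
  funext u v
  have hw : (v = w ∨ u = w) ↔ (u = w ∨ v = w) := or_comm
  simp only [orientBy, switch, hw]
  split_ifs <;> rfl

theorem orientBy_switchSeq (side : V → Bool) (E : EC2 V n)
    (L : List (V × Perm (Fin n × Bool))) :
    (E.switchSeq L).orientBy side = (E.orientBy side).switchSeq L := by
  induction L generalizing E with
  | nil => rfl
  | cons p L ih => exact (ih _).trans (congrArg (switchSeq · L) (orientBy_switch side E p.1 p.2))

theorem switchSeq_append (E : EC2 V n) (L₁ L₂ : List (V × Perm (Fin n × Bool))) :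
    E.switchSeq (L₁ ++ L₂) = (E.switchSeq L₁).switchSeq L₂ := by
  induction L₁ generalizing E with
  | nil => rfl
  | cons p L₁ ih => exact ih _

theorem isSome_of_switchSeq {E : EC2 V n} {L : List (V × Perm (Fin n × Bool))} {u v : V}
    (h : (E.switchSeq L u v).isSome) : (E u v).isSome := by
  induction L generalizing E with
  | nil => exact h
  | cons p L ih =>
    have := ih h
    simp only [switch] at this
    split_ifs at this <;> simpa using this

theorem switchSeq_map_const (E : EC2 V n) (τ : Perm (Fin n × Bool)) (l : List V) {u v : V}
    (huv : u ≠ v) :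
    E.switchSeq (l.map (·, τ)) u v = (E u v).map ⇑(τ ^ (l.count u + l.count v)) := by
  induction l generalizing E with
  | nil => simp [switchSeq]
  | cons a l ih =>
    simp only [List.map_cons, switchSeq, ih, switch, List.count_cons]
    rcases eq_or_ne u a with rfl | hu
    · simp [huv, Option.map_map, ← Perm.coe_mul, ← pow_succ, add_right_comm]
    rcases eq_or_ne v a with rfl | hv
    · simp [hu.symm, Option.map_map, ← Perm.coe_mul, ← pow_succ, add_assoc]
    · simp [hu, hv, hu.symm, hv.symm]

end EC2

section Translation

variable {V : Type} {n : ℕ}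

theorem translateArc_eq_orientBy_label (side : V → Bool) (G : ArcG V n) :
    translateArc side G = G.label.orientBy side :=
  rfl

theorem translateArc_switchSeq [DecidableEq V] (side : V → Bool) {G : ArcG V n}
    (hG : G.IsOriented) {L : List (V × Perm (Fin n × Bool))} (hL : ∀ p ∈ L, Consistent p.2) :
    translateArc side (G.switchSeq L) = (translateArc side G).switchSeq L := by
  rw [translateArc_eq_orientBy_label, translateArc_eq_orientBy_label, hG.label_switchSeq hL,
    EC2.orientBy_switchSeq]

def ArcG.IsHomToT2 (G : ArcG V n) (f : V → Bool) (i : Fin n) : Prop :=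
  ∀ u v j, G u v = some j → f u = false ∧ f v = true ∧ j = i

theorem ArcG.IsHomToT2.label_eq {G : ArcG V n} {f : V → Bool} {i : Fin n}
    (hf : G.IsHomToT2 f i) {u v : V} {c : Fin n × Bool} (h : G.label u v = some c) :
    c = (i, f v) := by
  simp only [ArcG.label, arcLabel] at h
  split at h
  next j hj =>
    obtain ⟨-, hv, rfl⟩ := hf u v j hj
    rw [← Option.some_inj.mp h, hv]
  next =>
    obtain ⟨j, hj, rfl⟩ := Option.map_eq_some_iff.mp h
    obtain ⟨hv, -, rfl⟩ := hf v u j hj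
    rw [hv]

end Translation

section SwitchableHoms

variable {V : Type} [DecidableEq V] {n : ℕ} {Γ : Subgroup (Perm (Fin n × Bool))}
  {side : V → Bool} {G : ArcG V n} {i : Fin n}

theorem swHomT2_of_swHomK2_translateArc (hcons : ∀ σ ∈ Γ, Consistent σ)
    (hbip : ∀ u v, (G u v).isSome → side u ≠ side v) (hG : G.IsOriented)
    (h : SwHomK2 Γ (translateArc side G) (i, true)) : SwHomT2 Γ G i := by
  obtain ⟨L, hLΓ, f, hf⟩ := h
  have hL : ∀ p ∈ L, Consistent p.2 := fun p hp => hcons _ (hLΓ p hp)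
  refine ⟨L, hLΓ, side, fun u v j huv => ?_⟩
  have hlabel : (G.switchSeq L).label u v = some (j, true) := by
    simp [ArcG.label, arcLabel, huv]
  have hside : side u ≠ side v := by
    have : (G.label.switchSeq L u v).isSome := by
      rw [← hG.label_switchSeq hL, hlabel]; rfl
    rcases ArcG.label_isSome (EC2.isSome_of_switchSeq this) with h | h
    · exact hbip u v h
    · exact (hbip v u h).symm
  have hcolour : ∀ c, (G.switchSeq L).label.orientBy side u v = some c → c = (i, true) :=
    fun c hc => (hf u v c (by rwa [← translateArc_switchSeq side hG hL])).2
  cases hu : side u <;> cases hv : side v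
  · exact absurd (hu.trans hv.symm) hside
  · have := hcolour (j, true) (by simp [EC2.orientBy, hu, hv, hlabel])
    exact ⟨rfl, rfl, (Prod.ext_iff.mp this).1⟩
  · have := hcolour (j, false) (by
      simp [EC2.orientBy, hu, hv, (hG.switchSeq hL).label_swap u v, hlabel, flipDir])
    simp at this
  · exact absurd (hu.trans hv.symm) hside

theorem swHomK2_translateArc_of_swHomT2 [Fintype V] (hcons : ∀ σ ∈ Γ, Consistent σ)
    (hτ : ∃ τ ∈ Γ, τ (i, false) = (i, true)) (hG : G.IsOriented) (h : SwHomT2 Γ G i) :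
    SwHomK2 Γ (translateArc side G) (i, true) := by
  obtain ⟨L, hLΓ, f, hf : (G.switchSeq L).IsHomToT2 f i⟩ := h
  obtain ⟨τ, hτΓ, hτ⟩ := hτ
  have hL : ∀ p ∈ L, Consistent p.2 := fun p hp => hcons _ (hLΓ p hp)
  let l := (Finset.univ.filter fun x => side x = true ∧ f x = false).toList
  have hcountA : ∀ x, side x = false → l.count x = 0 := fun x hx =>
    List.count_eq_zero.mpr (by simp [l, hx])
  have hcountB : ∀ x, side x = true → (τ ^ l.count x) (i, f x) = (i, true) := by
    intro x hx
    cases hfx : f x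
    · rw [List.count_eq_one_of_mem (Finset.nodup_toList _) (by simp [hx, hfx]), pow_one, hτ]
    · rw [List.count_eq_zero.mpr (by simp [l, hfx]), pow_zero, Perm.one_apply]
  refine ⟨L ++ l.map (·, τ), ?_, side, fun u v c h => ?_⟩
  · simp only [List.mem_append, List.mem_map]
    rintro p (hp | ⟨x, -, rfl⟩)
    exacts [hLΓ p hp, hτΓ]
  rw [EC2.switchSeq_append, ← translateArc_switchSeq side hG hL,
    translateArc_eq_orientBy_label] at h
  have huv : u ≠ v := by
    rintro rfl
    simpa [EC2.orientBy] using EC2.isSome_of_switchSeq (Option.isSome_iff_exists.mpr ⟨c, h⟩)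
  rw [EC2.switchSeq_map_const _ _ _ huv] at h
  obtain ⟨c₀, hc₀, rfl⟩ := Option.map_eq_some_iff.mp h
  rcases EC2.orientBy_eq_some hc₀ with ⟨hu, hv, hE⟩ | ⟨hu, hv, hE⟩
  · rw [hf.label_eq hE, hcountA u hu, zero_add, hcountB v hv]
    simp [hu, hv]
  · rw [hf.label_eq hE, hcountA v hv, add_zero, hcountB u hu]
    simp [hu, hv]

end SwitchableHoms

/-- For a bipartite arc-coloured graph `G` with `Γ` acting transitively
on arc colours and directions, `G` admits a `Γ`-switchable homomorphism to `T₂^i` iff the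
translated `2n`-edge-coloured graph `G'` admits a `Γ'`-switchable homomorphism to
`K₂^{i⁺}` (here `Γ` and its isomorphic copy `Γ'` are both realised as a subgroup of the
permutations of `Fin n × Bool`). -/
theorem arc_to_edge_translation {V : Type} [Fintype V] [DecidableEq V] {n : ℕ}
    (Γ : Subgroup (Perm (Fin n × Bool))) (hcons : ∀ σ ∈ Γ, Consistent σ)
    (htr : ∀ p q : Fin n × Bool, ∃ σ ∈ Γ, σ p = q)
    (side : V → Bool) (G : ArcG V n)
    (hbip : ∀ u v, (G u v).isSome → side u ≠ side v)
    (hprop : ∀ u v, (G u v).isSome → G v u = none) (i : Fin n) :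
    SwHomT2 Γ G i ↔ SwHomK2 Γ (translateArc side G) (i, true) :=
  ⟨swHomK2_translateArc_of_swHomT2 hcons (htr _ _) hprop,
    swHomT2_of_swHomK2_translateArc hcons hbip hprop⟩
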